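/- Let $M$ be a complex manifold with $H^0(M, T^*M) = 0$, let $\pi \colon X \to \mathbb{C}$ be a holomorphic map from a complex manifold $X$, and let $p \colon X \to M$ be a holomorphic map such that: (i) $p$ restricted to $\pi^{-1}(0)$ realizes $\pi^{-1}(0) \cong T^*M$ as the total space of the cotangent bundle over $M$ (compatibly with $p$), and (ii) $p$ restricted to $\pi^{-1}(1)$ is a torsor under $T^*M$ with nonzero class in $H^1(M, T^*M)$, hence has no holomorphic section; assume further any holomorphic function on $M$ is constant. Suppose additionally a $\mathbb{C}^*$-action on $X$ over the scaling action on $\mathbb{C}$ commutes with $p$ and acts on $\pi^{-1}(0) \cong T^*M$ by fiberwise scaling. Then the only holomorphic section $s \colon M \to X$ of $p$ with $\pi \circ s$ constant equal to $c$, for any $c \in \mathbb{C}$ (after normalizing by the $\mathbb{C}^*$-action to $c \in \{0,1\}$), is the zero section of $T^*M \subset X$. -/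

import Mathlib

open Manifold Bundle

/-- Let `M` be a complex manifold with `H⁰(M, T*M) = 0` and only constant
holomorphic functions, `π : X → ℂ` and `p : X → M` holomorphic with: (i) `p` on `π⁻¹(0)`
realizes `π⁻¹(0) ≅ T*M` (total space of the cotangent bundle, realized as `Hom(TM, ℂ)`) via
a biholomorphism `Φ` compatible with `p`, under which holomorphic sections of `p` into
`π⁻¹(0)` correspond to holomorphic 1-forms on `M`; (ii) `p` on `π⁻¹(1)` is a torsor under
`T*M` with nonzero class in `H¹(M, T*M)`, hence admits no holomorphic section.  Suppose a
`ℂ*`-action `σ` on `X` over the scaling action on `ℂ` commutes with `p` and acts on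
`π⁻¹(0) ≅ T*M` by fiberwise scaling.  Then the only holomorphic section `s : M → X` of `p`
(whose `π`-value is automatically constant and can be normalized by the `ℂ*`-action into
`{0,1}`) is the zero section of `T*M ⊂ X`. -/
theorem only_section_is_zero_section
    {E_M : Type*} [NormedAddCommGroup E_M] [NormedSpace ℂ E_M]
    {M : Type*} [TopologicalSpace M] [ChartedSpace E_M M]
    [IsManifold 𝓘(ℂ, E_M) ((⊤ : ℕ∞) : WithTop ℕ∞) M]
    {E_X : Type*} [NormedAddCommGroup E_X] [NormedSpace ℂ E_X]
    {X : Type*} [TopologicalSpace X] [ChartedSpace E_X X]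
    [IsManifold 𝓘(ℂ, E_X) ((⊤ : ℕ∞) : WithTop ℕ∞) X]
    (prL : X → ℂ) (hπ : MDifferentiable 𝓘(ℂ, E_X) 𝓘(ℂ) prL)
    (p : X → M) (hp : MDifferentiable 𝓘(ℂ, E_X) 𝓘(ℂ, E_M) p)
    -- only constant holomorphic functions on `M`
    (hfunc : ∀ f : M → ℂ, MDifferentiable 𝓘(ℂ, E_M) 𝓘(ℂ) f → ∃ c : ℂ, ∀ m, f m = c)
    -- `H⁰(M, T*M) = 0`
    (h0 : ∀ ω : ∀ m : M, TangentSpace 𝓘(ℂ, E_M) m →L[ℂ] ℂ,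
      MDifferentiable 𝓘(ℂ, E_M) (𝓘(ℂ, E_M).prod 𝓘(ℂ, E_M →L[ℂ] ℂ))
        (fun m => Bundle.TotalSpace.mk' (E_M →L[ℂ] ℂ) m (ω m) :
          M → Bundle.TotalSpace (E_M →L[ℂ] ℂ)
            (fun x : M => TangentSpace 𝓘(ℂ, E_M) x →L[ℂ]
              Bundle.Trivial M ℂ x)) →
      ∀ m, ω m = 0)
    -- (i): `π⁻¹(0)` is the total space of `T*M`, compatibly with `p`
    (Φ : Bundle.TotalSpace (E_M →L[ℂ] ℂ)
      (fun x : M => TangentSpace 𝓘(ℂ, E_M) x →L[ℂ]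
        Bundle.Trivial M ℂ x) → X)
    (hΦ : MDifferentiable (𝓘(ℂ, E_M).prod 𝓘(ℂ, E_M →L[ℂ] ℂ)) 𝓘(ℂ, E_X) Φ)
    (hΦinj : Function.Injective Φ)
    (hΦrange : Set.range Φ = prL ⁻¹' {0})
    (hΦp : ∀ w, p (Φ w) = w.proj)
    -- (i) continued: holomorphic sections of `p` into `π⁻¹(0)` are holomorphic 1-forms
    (hΦsec : ∀ s : M → X, MDifferentiable 𝓘(ℂ, E_M) 𝓘(ℂ, E_X) s →
      (∀ m, p (s m) = m) → (∀ m, prL (s m) = 0) →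
      ∃ ω : ∀ m : M, TangentSpace 𝓘(ℂ, E_M) m →L[ℂ] ℂ,
        MDifferentiable 𝓘(ℂ, E_M) (𝓘(ℂ, E_M).prod 𝓘(ℂ, E_M →L[ℂ] ℂ))
          (fun m => Bundle.TotalSpace.mk' (E_M →L[ℂ] ℂ) m (ω m) :
            M → Bundle.TotalSpace (E_M →L[ℂ] ℂ)
              (fun x : M => TangentSpace 𝓘(ℂ, E_M) x →L[ℂ]
                Bundle.Trivial M ℂ x)) ∧
        ∀ m, s m = Φ (Bundle.TotalSpace.mk' (E_M →L[ℂ] ℂ) m (ω m)))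
    -- (ii): `π⁻¹(1) → M` is a `T*M`-torsor with nonzero class, hence has no holomorphic
    -- section
    (h1 : ¬ ∃ s : M → X, MDifferentiable 𝓘(ℂ, E_M) 𝓘(ℂ, E_X) s ∧
      (∀ m, p (s m) = m) ∧ ∀ m, prL (s m) = 1)
    -- the `ℂ*`-action on `X` over the scaling action on `ℂ`, commuting with `p` and acting
    -- on `π⁻¹(0) ≅ T*M` by fiberwise scaling
    (σ : ℂˣ → X → X) (hσ_holo : ∀ t, MDifferentiable 𝓘(ℂ, E_X) 𝓘(ℂ, E_X) (σ t))
    (hσπ : ∀ t x, prL (σ t x) = (t : ℂ) * prL x)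
    (hσp : ∀ t x, p (σ t x) = p x)
    (hσ0 : ∀ (t : ℂˣ) (w : Bundle.TotalSpace (E_M →L[ℂ] ℂ)
      (fun x : M => TangentSpace 𝓘(ℂ, E_M) x →L[ℂ]
        Bundle.Trivial M ℂ x)),
      σ t (Φ w) = Φ (Bundle.TotalSpace.mk' (E_M →L[ℂ] ℂ) w.proj ((t : ℂ) • w.snd))) :
    ∀ s : M → X, MDifferentiable 𝓘(ℂ, E_M) 𝓘(ℂ, E_X) s → (∀ m, p (s m) = m) →
      ∀ m, s m = Φ (Bundle.TotalSpace.mk' (E_M →L[ℂ] ℂ) m 0) := by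
  intro s hs hps
  -- π ∘ s is holomorphic, hence constant
  obtain ⟨c, hc⟩ := hfunc (fun m => prL (s m)) (hπ.comp hs)
  by_cases hc0 : c = 0
  · -- section into π⁻¹(0): it's a holomorphic 1-form, and H⁰ = 0
    obtain ⟨ω, hω, hωs⟩ := hΦsec s hs hps (fun m => by rw [hc m, hc0])
    have hω0 := h0 ω hω
    intro m
    rw [hωs m, hω0 m]
  · -- rescale to a section into π⁻¹(1), contradicting h1
    exfalso
    apply h1
    refine ⟨fun m => σ (Units.mk0 c hc0)⁻¹ (s m),
      (hσ_holo _).comp hs, fun m => by rw [hσp, hps], fun m => ?_⟩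
    rw [hσπ, hc m]
    simp [hc0]
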